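/- Let (G,[·,·],α,β) be a BiHom-Lie algebra with α, β surjective, λ ≠ 0, μ ≠ 0 and γ = -μ. Then a linear map d (commuting with α,β) is a (λ,μ,-μ)-α^kβ^l-derivation if and only if it is both a (1,0,0)-α^kβ^l-derivation and a (0,1,-1)-α^kβ^l-derivation, which is in turn equivalent to being a (1,1,-1)-α^kβ^l-derivation. -/

import Mathlib

/-! Write `A = α^k β^l` and `Φ(x, y) = [d x, A y] - [A x, d y]`. Since `d` and `A` commute with
`α` and `β`, BiHom-skew-symmetry makes `Φ(β u, α v)` symmetric in `u, v`, while `[β u, α v]` is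
antisymmetric. Adding the derivation identities at `(β u, α v)` and `(β v, α u)` therefore gives
`2μ Φ(β u, α v) = 0`, so `Φ` vanishes by surjectivity of `α` and `β`; the identity then reduces
to `λ d [x, y] = 0`. -/

/-- `d` is a `(λ, μ, γ)`-derivation of the bracket `br` twisted by `A`. -/
def IsGenDerivation {R G : Type*} [CommRing R] [AddCommGroup G] [Module R G]
    (br : G →ₗ[R] G →ₗ[R] G) (A d : Module.End R G) (lam mu gam : R) : Prop :=
  ∀ x y : G, lam • d (br x y) = mu • br (d x) (A y) + gam • br (A x) (d y)

theorem Commute.pow_mul_pow_right {M : Type*} [Monoid M] {a b c : M} (ha : Commute c a)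
    (hb : Commute c b) (k l : ℕ) : Commute c (a ^ k * b ^ l) :=
  (ha.pow_right k).mul_right (hb.pow_right l)

section BiHomSkew

variable {R G : Type*} [Field R] [AddCommGroup G] [Module R G]
  {br : G →ₗ[R] G →ₗ[R] G} {α β : Module.End R G}

theorem isGenDerivation_one_one_neg_one_iff {A d : Module.End R G} :
    IsGenDerivation br A d 1 1 (-1) ↔
      ∀ x y : G, d (br x y) = br (d x) (A y) - br (A x) (d y) := by
  simp only [IsGenDerivation, one_smul, neg_one_smul, sub_eq_add_neg]

theorem br_apply_beta_apply_alpha_of_commute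
    (hskew : ∀ x y : G, br (β x) (α y) = - br (β y) (α x)) {f g : Module.End R G}
    (hfα : Commute f α) (hfβ : Commute f β) (hgα : Commute g α) (hgβ : Commute g β) (u v : G) :
    br (f (β u)) (g (α v)) = - br (g (β v)) (f (α u)) := by
  have hf : f (β u) = β (f u) := LinearMap.congr_fun hfβ.eq u
  have hg : g (α v) = α (g v) := LinearMap.congr_fun hgα.eq v
  have hg' : g (β v) = β (g v) := LinearMap.congr_fun hgβ.eq v
  have hf' : f (α u) = α (f u) := LinearMap.congr_fun hfα.eq u
  rw [hf, hg, hg', hf', hskew]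

variable [CharZero R] (hskew : ∀ x y : G, br (β x) (α y) = - br (β y) (α x))
  (hαsurj : Function.Surjective α) (hβsurj : Function.Surjective β)
  {A d : Module.End R G} (hAα : Commute A α) (hAβ : Commute A β)
  (hdα : Commute d α) (hdβ : Commute d β)
include hskew hαsurj hβsurj hAα hAβ hdα hdβ

theorem IsGenDerivation.br_apply_eq_of_gam_eq_neg {c m : R} (hm : m ≠ 0)
    (h : IsGenDerivation br A d c m (-m)) (x y : G) : br (d x) (A y) = br (A x) (d y) := by
  obtain ⟨u, rfl⟩ := hβsurj x
  obtain ⟨v, rfl⟩ := hαsurj y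
  have hdA := br_apply_beta_apply_alpha_of_commute hskew hdα hdβ hAα hAβ v u
  have hAd := br_apply_beta_apply_alpha_of_commute hskew hAα hAβ hdα hdβ v u
  have hsum : c • d (br (β u) (α v)) + c • d (br (β v) (α u)) = 0 := by
    rw [← smul_add, ← map_add, hskew u v, neg_add_cancel, map_zero, smul_zero]
  rw [h, h, hdA, hAd] at hsum
  have h2m : (2 * m) • (br (d (β u)) (A (α v)) - br (A (β u)) (d (α v))) = 0 := by
    rw [← hsum]; module
  have hΦ := (smul_eq_zero.mp h2m).resolve_left (mul_ne_zero two_ne_zero hm)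
  exact sub_eq_zero.mp hΦ

theorem isGenDerivation_gam_eq_neg_iff {c m : R} (hc : c ≠ 0) (hm : m ≠ 0) :
    IsGenDerivation br A d c m (-m) ↔
      (∀ x y : G, d (br x y) = 0) ∧ ∀ x y : G, br (d x) (A y) = br (A x) (d y) := by
  have reduce (hΦ : ∀ x y : G, br (d x) (A y) = br (A x) (d y)) (x y : G) :
      (c • d (br x y) = m • br (d x) (A y) + (-m) • br (A x) (d y)) ↔ d (br x y) = 0 := by
    rw [hΦ, neg_smul, add_neg_cancel, smul_eq_zero, or_iff_right hc]
  constructor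
  · intro h
    have hΦ := h.br_apply_eq_of_gam_eq_neg hskew hαsurj hβsurj hAα hAβ hdα hdβ hm
    exact ⟨fun x y => (reduce hΦ x y).mp (h x y), hΦ⟩
  · rintro ⟨h0, hΦ⟩ x y
    exact (reduce hΦ x y).mpr (h0 x y)

end BiHomSkew

theorem genDer_of_gam_eq_neg_mu_general {G : Type*} [AddCommGroup G] [Module ℂ G]
    (α β : G →ₗ[ℂ] G) (br : G →ₗ[ℂ] G →ₗ[ℂ] G)
    (hcomm : α ∘ₗ β = β ∘ₗ α)
    (hskew : ∀ x y : G, br (β x) (α y) = - br (β y) (α x))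
    (hαsurj : Function.Surjective α) (hβsurj : Function.Surjective β)
    (k l : ℕ) (lam mu : ℂ) (hlam : lam ≠ 0) (hmu : mu ≠ 0) :
    ∀ d : G →ₗ[ℂ] G, d ∘ₗ α = α ∘ₗ d → d ∘ₗ β = β ∘ₗ d →
      (((∀ x y : G, lam • d (br x y) =
          mu • br (d x) ((α ^ k * β ^ l) y) + (-mu) • br ((α ^ k * β ^ l) x) (d y)) ↔
        ((∀ x y : G, d (br x y) = 0) ∧
         (∀ x y : G, br (d x) ((α ^ k * β ^ l) y) = br ((α ^ k * β ^ l) x) (d y)))) ∧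
       ((∀ x y : G, lam • d (br x y) =
          mu • br (d x) ((α ^ k * β ^ l) y) + (-mu) • br ((α ^ k * β ^ l) x) (d y)) ↔
        (∀ x y : G, d (br x y) =
          br (d x) ((α ^ k * β ^ l) y) - br ((α ^ k * β ^ l) x) (d y)))) := by
  intro d hdα hdβ
  have hαβ : Commute α β := hcomm
  have hAα : Commute (α ^ k * β ^ l) α := ((Commute.refl α).pow_mul_pow_right hαβ k l).symm
  have hAβ : Commute (α ^ k * β ^ l) β := (hαβ.symm.pow_mul_pow_right (Commute.refl β) k l).symm
  have key {c m : ℂ} (hc : c ≠ 0) (hm : m ≠ 0) :=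
    isGenDerivation_gam_eq_neg_iff (br := br) (d := d) hskew hαsurj hβsurj hAα hAβ hdα hdβ hc hm
  exact ⟨key hlam hmu, (key hlam hmu).trans <|
    (key one_ne_zero one_ne_zero).symm.trans isGenDerivation_one_one_neg_one_iff⟩

/-- For a BiHom-Lie algebra with α, β surjective, λ ≠ 0, μ ≠ 0 and γ = -μ:
a map d commuting with α, β is a (λ,μ,-μ)-α^kβ^l-derivation iff it is both a
(1,0,0)- and a (0,1,-1)-α^kβ^l-derivation, iff it is a (1,1,-1)-α^kβ^l-derivation. -/
theorem genDer_of_gam_eq_neg_mu {G : Type*} [AddCommGroup G] [Module ℂ G]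
    (α β : G →ₗ[ℂ] G) (br : G →ₗ[ℂ] G →ₗ[ℂ] G)
    (hcomm : α ∘ₗ β = β ∘ₗ α)
    (hskew : ∀ x y : G, br (β x) (α y) = - br (β y) (α x))
    (hjac : ∀ x y z : G,
      br (β (β x)) (br (β y) (α z)) + br (β (β y)) (br (β z) (α x)) +
        br (β (β z)) (br (β x) (α y)) = 0)
    (hα : ∀ x y : G, α (br x y) = br (α x) (α y))
    (hβ : ∀ x y : G, β (br x y) = br (β x) (β y))
    (hαsurj : Function.Surjective α) (hβsurj : Function.Surjective β)
    (k l : ℕ) (lam mu : ℂ) (hlam : lam ≠ 0) (hmu : mu ≠ 0) :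
    ∀ d : G →ₗ[ℂ] G, d ∘ₗ α = α ∘ₗ d → d ∘ₗ β = β ∘ₗ d →
      (((∀ x y : G, lam • d (br x y) =
          mu • br (d x) ((α ^ k * β ^ l) y) + (-mu) • br ((α ^ k * β ^ l) x) (d y)) ↔
        ((∀ x y : G, d (br x y) = 0) ∧
         (∀ x y : G, br (d x) ((α ^ k * β ^ l) y) = br ((α ^ k * β ^ l) x) (d y)))) ∧
       ((∀ x y : G, lam • d (br x y) =
          mu • br (d x) ((α ^ k * β ^ l) y) + (-mu) • br ((α ^ k * β ^ l) x) (d y)) ↔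
        (∀ x y : G, d (br x y) =
          br (d x) ((α ^ k * β ^ l) y) - br ((α ^ k * β ^ l) x) (d y)))) :=
  genDer_of_gam_eq_neg_mu_general α β br hcomm hskew hαsurj hβsurj k l lam mu hlam hmu
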